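/- Completeness of the distribution-level logic: in an image-finite pLTS the logical metric d^L_d(Δ₁,Δ₂) = sup_ψ |⟦ψ⟧(Δ₁) − ⟦ψ⟧(Δ₂)| over formulae ψ of L^{D*} is a distribution-based bisimulation metric, and hence d_d = d^L_d. -/

import Mathlib

open scoped BigOperators

/-- A (full) probability distribution over a finite set `S`. -/
def IsDist {S : Type} [Fintype S] (Δ : S → ℝ) : Prop :=
  (∀ s, 0 ≤ Δ s) ∧ ∑ s, Δ s = 1

/-- A matching (coupling) for a pair of distributions. -/
def IsMatching {S : Type} [Fintype S] (ω : S × S → ℝ) (Δ Θ : S → ℝ) : Prop :=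
  IsDist ω ∧ (∀ s, ∑ t, ω (s, t) = Δ s) ∧ (∀ t, ∑ s, ω (s, t) = Θ t)

/-- The Kantorovich lifting of `d` (primal formulation, via matchings). -/
noncomputable def Kan {S : Type} [Fintype S] (d : S → S → ℝ) (Δ Θ : S → ℝ) : ℝ :=
  sInf {r | ∃ ω : S × S → ℝ, IsMatching ω Δ Θ ∧ r = ∑ p : S × S, d p.1 p.2 * ω p}

/-- The Kantorovich lifting of `d` (dual linear-programming formulation). -/
noncomputable def KanD {S : Type} [Fintype S] (d : S → S → ℝ) (Δ Θ : S → ℝ) : ℝ :=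
  sSup {r | ∃ x : S → ℝ, (∀ s, 0 ≤ x s ∧ x s ≤ 1) ∧ (∀ s t, x s - x t ≤ d s t) ∧
    r = ∑ s, (Δ s - Θ s) * x s}

/-- `d` is a pseudometric. -/
def IsPseudometric {X : Type*} (d : X → X → ℝ) : Prop :=
  (∀ x, d x x = 0) ∧ (∀ x y, d x y = d y x) ∧ ∀ x y z, d x z ≤ d x y + d y z

/-- `d` is `1`-bounded (takes values in `[0,1]`). -/
def Bounded1 {X : Type*} (d : X → X → ℝ) : Prop := ∀ x y, 0 ≤ d x y ∧ d x y ≤ 1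

open Classical in
/-- Infimum of a set of reals with the convention `inf ∅ = 1`. -/
noncomputable def inf1 (s : Set ℝ) : ℝ := if s.Nonempty then sInf s else 1

open Classical in
/-- Supremum of a set of reals with the convention `sup ∅ = 0`. -/
noncomputable def sup0 (s : Set ℝ) : ℝ := if s.Nonempty then sSup s else 0

/-- The Hausdorff lifting of a `1`-bounded metric to subsets. -/
noncomputable def hausd {X : Type*} (d : X → X → ℝ) (P Q : Set X) : ℝ :=
  max (sup0 {r | ∃ x ∈ P, r = inf1 {r' | ∃ y ∈ Q, r' = d x y}})
      (sup0 {r | ∃ y ∈ Q, r = inf1 {r' | ∃ x ∈ P, r' = d x y}})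

/-- A probabilistic labelled transition system. -/
structure PLTS (S : Type) (A : Type) where
  trans : S → A → (S → ℝ) → Prop

/-- The set of `a`-successor distributions of state `s`. -/
def der {S A : Type} (T : PLTS S A) (s : S) (a : A) : Set (S → ℝ) := {Δ | T.trans s a Δ}

/-- Image-finiteness of a pLTS. -/
def ImageFinite {S A : Type} (T : PLTS S A) : Prop := ∀ s a, (der T s a).Finite

/-- Every transition target is a (full) distribution. -/
def WellFormed {S A : Type} [Fintype S] (T : PLTS S A) : Prop :=
  ∀ s a Δ, T.trans s a Δ → IsDist Δ

/-- `d` is a state-based bisimulation metric. -/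
def IsSBM {S A : Type} [Fintype S] (T : PLTS S A) (d : S → S → ℝ) : Prop :=
  IsPseudometric d ∧ Bounded1 d ∧
  ∀ s t (ε : ℝ), 0 ≤ ε → ε < 1 → d s t ≤ ε →
    ∀ a Δ, T.trans s a Δ → ∃ Δ', T.trans t a Δ' ∧ Kan d Δ Δ' ≤ ε

/-- The unit interval `[0,1]` as a type of probabilities. -/
abbrev UI : Type := { p : ℝ // 0 ≤ p ∧ p ≤ 1 }

/-- A subdistribution over a finite set `S`. -/
def IsSubDist {S : Type} [Fintype S] (Δ : S → ℝ) : Prop :=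
  (∀ s, 0 ≤ Δ s) ∧ ∑ s, Δ s ≤ 1

/-- The mass `|Δ|` of a subdistribution. -/
noncomputable def mass {S : Type} [Fintype S] (Δ : S → ℝ) : ℝ := ∑ s, Δ s

/-- The lifted transition relation on subdistributions:
`Δ →ᵃ Δ'` if `Δ' = Σ_{s ∈ supp Δ} Δ(s)·Δ_s`, where each `Δ_s` is an
`a`-successor of `s`, or the empty subdistribution if `s` has no
`a`-transition. -/
def liftTrans {S A : Type} [Fintype S] (T : PLTS S A) (a : A) (Δ Δ' : S → ℝ) : Prop :=
  ∃ f : S → S → ℝ,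
    (∀ s, Δ s ≠ 0 →
      (T.trans s a (f s) ∨ ((∀ Θ, ¬ T.trans s a Θ) ∧ f s = fun _ => 0))) ∧
    Δ' = fun t => ∑ s, Δ s * f s t

/-- Formulae of the distribution-level logic `L^{D*}`. -/
inductive DFm (A : Type) : Type where
  | top : DFm A
  | neg : DFm A → DFm A
  | sub : DFm A → UI → DFm A
  | and : DFm A → DFm A → DFm A
  | dia : A → DFm A → DFm A

/-- Semantics of `L^{D*}` formulae on subdistributions. -/
noncomputable def semL {S A : Type} [Fintype S] (T : PLTS S A) : DFm A → (S → ℝ) → ℝ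
  | DFm.top, Δ => ∑ s, Δ s
  | DFm.neg ψ, Δ => 1 - semL T ψ Δ
  | DFm.sub ψ p, Δ => max (semL T ψ Δ - p.1) 0
  | DFm.and ψ₁ ψ₂, Δ => min (semL T ψ₁ Δ) (semL T ψ₂ Δ)
  | DFm.dia a ψ, Δ => sup0 {r | ∃ Δ', liftTrans T a Δ Δ' ∧ r = semL T ψ Δ'}

/-- `d` is a distribution-based bisimulation metric: a 1-bounded pseudometric
on subdistributions dominating the mass difference and satisfying the
ε-transfer condition for lifted transitions. -/
def IsDBM {S A : Type} [Fintype S] (T : PLTS S A)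
    (d : (S → ℝ) → (S → ℝ) → ℝ) : Prop :=
  (∀ Δ, IsSubDist Δ → d Δ Δ = 0) ∧
  (∀ Δ Θ, IsSubDist Δ → IsSubDist Θ → d Δ Θ = d Θ Δ) ∧
  (∀ Δ Θ Ξ, IsSubDist Δ → IsSubDist Θ → IsSubDist Ξ → d Δ Ξ ≤ d Δ Θ + d Θ Ξ) ∧
  (∀ Δ Θ, IsSubDist Δ → IsSubDist Θ → 0 ≤ d Δ Θ ∧ d Δ Θ ≤ 1) ∧
  (∀ Δ Θ, IsSubDist Δ → IsSubDist Θ → |mass Δ - mass Θ| ≤ d Δ Θ) ∧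
  (∀ Δ₁ Δ₂, IsSubDist Δ₁ → IsSubDist Δ₂ →
    ∀ ε : ℝ, 0 ≤ ε → ε < 1 → d Δ₁ Δ₂ ≤ ε →
      ∀ a Δ₁', liftTrans T a Δ₁ Δ₁' →
        ∃ Δ₂', liftTrans T a Δ₂ Δ₂' ∧ d Δ₁' Δ₂' ≤ ε)

/-- The logical metric on subdistributions induced by `L^{D*}`. -/
noncomputable def dDistLogic {S A : Type} [Fintype S] (T : PLTS S A) :
    (S → ℝ) → (S → ℝ) → ℝ :=
  fun Δ Θ => sSup {r | ∃ ψ : DFm A, r = |semL T ψ Δ - semL T ψ Θ|}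

/-!
If `dDistLogic T Δ₁ Δ₂ ≤ ε` but every `a`-successor `Θ` of `Δ₂` is more than `ε` away from a
given `a`-successor `Δ₁'` of `Δ₁`, then for each `Θ` some formula `ψ` has
`⟦ψ⟧(Δ₁') - ⟦ψ⟧(Θ) > ε`; thresholding it at `⟦ψ⟧(Θ)` makes it vanish on `Θ`. Image-finiteness
lets us take the conjunction `χ` of these finitely many formulae, and then `⟨a⟩χ` is `0` on `Δ₂`
but `> ε` on `Δ₁`, a contradiction. So the logical metric satisfies the transfer condition;
the other axioms of a distribution-based bisimulation metric are immediate. Conversely every such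
metric bounds each `|⟦ψ⟧(Δ) - ⟦ψ⟧(Θ)|`, by induction on `ψ`, so the least one is the logical one.
-/

lemma sup0_eq_sSup (s : Set ℝ) : sup0 s = sSup s := by
  classical
  unfold sup0
  split_ifs with h
  · rfl
  · rw [Set.not_nonempty_iff_eq_empty.mp h, Real.sSup_empty]

section LiftTrans

variable {S A : Type} [Fintype S] (T : PLTS S A)

lemma liftTrans_exists (a : A) (Δ : S → ℝ) : ∃ Δ', liftTrans T a Δ Δ' := by
  classical
  refine ⟨_, fun s => if h : ∃ Θ, T.trans s a Θ then h.choose else fun _ => 0,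
    fun s _ => ?_, rfl⟩
  by_cases h : ∃ Θ, T.trans s a Θ
  · exact .inl (by simpa [dif_pos h] using h.choose_spec)
  · exact .inr ⟨not_exists.mp h, by simp [dif_neg h]⟩

variable {T}

lemma liftTrans_isSubDist (hwf : WellFormed T) {a : A} {Δ Δ' : S → ℝ}
    (hΔ : IsSubDist Δ) (h : liftTrans T a Δ Δ') : IsSubDist Δ' := by
  obtain ⟨f, hf, rfl⟩ := h
  have hrow : ∀ s, Δ s ≠ 0 → IsSubDist (f s) := by
    intro s hs
    rcases hf s hs with htrans | ⟨-, hzero⟩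
    · exact ⟨(hwf s a _ htrans).1, (hwf s a _ htrans).2.le⟩
    · rw [hzero]
      exact ⟨fun _ => le_rfl, by simp⟩
  have hterm : ∀ s t, 0 ≤ Δ s * f s t := by
    intro s t
    by_cases hs : Δ s = 0
    · simp [hs]
    · exact mul_nonneg (hΔ.1 s) ((hrow s hs).1 t)
  refine ⟨fun t => Finset.sum_nonneg fun s _ => hterm s t, ?_⟩
  calc ∑ t, ∑ s, Δ s * f s t = ∑ s, Δ s * ∑ t, f s t := by
        rw [Finset.sum_comm]
        simp_rw [Finset.mul_sum]
    _ ≤ ∑ s, Δ s := Finset.sum_le_sum fun s _ => by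
        by_cases hs : Δ s = 0
        · simp [hs]
        · exact mul_le_of_le_one_right (hΔ.1 s) (hrow s hs).2
    _ ≤ 1 := hΔ.2

end LiftTrans

section Semantics

variable {S A : Type} [Fintype S] {T : PLTS S A}

lemma semL_dia (a : A) (ψ : DFm A) (Δ : S → ℝ) :
    semL T (DFm.dia a ψ) Δ = sSup {r | ∃ Δ', liftTrans T a Δ Δ' ∧ r = semL T ψ Δ'} := by
  rw [semL, sup0_eq_sSup]

lemma semL_dia_le {a : A} {ψ : DFm A} {Δ : S → ℝ} {c : ℝ} (hc : 0 ≤ c)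
    (h : ∀ Δ', liftTrans T a Δ Δ' → semL T ψ Δ' ≤ c) : semL T (DFm.dia a ψ) Δ ≤ c := by
  rw [semL_dia]
  exact Real.sSup_le (by rintro r ⟨Δ', hΔ', rfl⟩; exact h Δ' hΔ') hc

lemma semL_mem_Icc (hwf : WellFormed T) (ψ : DFm A) {Δ : S → ℝ} (hΔ : IsSubDist Δ) :
    semL T ψ Δ ∈ Set.Icc 0 1 := by
  induction ψ generalizing Δ with
  | top => exact ⟨Finset.sum_nonneg fun s _ => hΔ.1 s, hΔ.2⟩
  | neg ψ ih =>
      obtain ⟨h0, h1⟩ := ih hΔ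
      simp only [semL, Set.mem_Icc]
      constructor <;> linarith
  | sub ψ p ih =>
      simp only [semL, Set.mem_Icc]
      exact ⟨le_max_right _ _, max_le (by linarith [(ih hΔ).2, p.2.1]) zero_le_one⟩
  | and ψ₁ ψ₂ ih₁ ih₂ =>
      simp only [semL, Set.mem_Icc]
      exact ⟨le_min (ih₁ hΔ).1 (ih₂ hΔ).1, min_le_of_left_le (ih₁ hΔ).2⟩
  | dia a ψ ih =>
      refine ⟨?_, semL_dia_le zero_le_one fun Δ' hΔ' => (ih (liftTrans_isSubDist hwf hΔ hΔ')).2⟩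
      rw [semL_dia]
      exact Real.sSup_nonneg (by rintro r ⟨Δ', hΔ', rfl⟩; exact (ih (liftTrans_isSubDist hwf hΔ hΔ')).1)

lemma semL_le_semL_dia (hwf : WellFormed T) {a : A} (ψ : DFm A) {Δ Δ' : S → ℝ}
    (hΔ : IsSubDist Δ) (hΔ' : liftTrans T a Δ Δ') : semL T ψ Δ' ≤ semL T (DFm.dia a ψ) Δ := by
  rw [semL_dia]
  refine le_csSup ⟨1, ?_⟩ ⟨Δ', hΔ', rfl⟩
  rintro r ⟨Δ'', hΔ'', rfl⟩
  exact (semL_mem_Icc hwf ψ (liftTrans_isSubDist hwf hΔ hΔ'')).2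

lemma exists_semL_eq_inf' {ι : Type*} {s : Finset ι} (hs : s.Nonempty) (φ : ι → DFm A) :
    ∃ χ : DFm A, ∀ Δ : S → ℝ, semL T χ Δ = s.inf' hs fun i => semL T (φ i) Δ := by
  induction hs using Finset.Nonempty.cons_induction with
  | singleton i => exact ⟨φ i, fun Δ => by rw [Finset.inf'_singleton]⟩
  | cons i s hi hs ih =>
      obtain ⟨χ, hχ⟩ := ih
      exact ⟨DFm.and (φ i) χ, fun Δ => by rw [Finset.inf'_cons hs, semL, hχ]⟩

end Semantics

section LogicalMetric

variable {S A : Type} [Fintype S] {T : PLTS S A}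

lemma abs_semL_sub_le_one (hwf : WellFormed T) (ψ : DFm A) {Δ Θ : S → ℝ}
    (hΔ : IsSubDist Δ) (hΘ : IsSubDist Θ) : |semL T ψ Δ - semL T ψ Θ| ≤ 1 := by
  have h₁ := semL_mem_Icc hwf ψ hΔ
  have h₂ := semL_mem_Icc hwf ψ hΘ
  rw [abs_le]
  constructor <;> linarith [h₁.1, h₁.2, h₂.1, h₂.2]

lemma le_dDistLogic (hwf : WellFormed T) {Δ Θ : S → ℝ}
    (hΔ : IsSubDist Δ) (hΘ : IsSubDist Θ) (ψ : DFm A) :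
    |semL T ψ Δ - semL T ψ Θ| ≤ dDistLogic T Δ Θ :=
  le_csSup ⟨1, by rintro r ⟨φ, rfl⟩; exact abs_semL_sub_le_one hwf φ hΔ hΘ⟩ ⟨ψ, rfl⟩

lemma dDistLogic_le {Δ Θ : S → ℝ} {b : ℝ}
    (h : ∀ ψ : DFm A, |semL T ψ Δ - semL T ψ Θ| ≤ b) : dDistLogic T Δ Θ ≤ b :=
  csSup_le ⟨_, DFm.top, rfl⟩ (by rintro r ⟨ψ, rfl⟩; exact h ψ)

lemma exists_semL_sub_gt_of_lt_dDistLogic {Δ Θ : S → ℝ} {ε : ℝ}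
    (h : ε < dDistLogic T Δ Θ) : ∃ ψ : DFm A, ε < semL T ψ Δ - semL T ψ Θ := by
  by_contra! hc
  refine (dDistLogic_le fun ψ => abs_le.mpr ⟨?_, hc ψ⟩).not_gt h
  have := hc (DFm.neg ψ)
  simp only [semL] at this
  linarith

lemma exists_separating_formula (hwf : WellFormed T) {Δ Θ : S → ℝ} (hΘ : IsSubDist Θ) {ε : ℝ}
    (h : ε < dDistLogic T Δ Θ) : ∃ ψ : DFm A, ε < semL T ψ Δ ∧ semL T ψ Θ = 0 := by
  obtain ⟨ψ, hψ⟩ := exists_semL_sub_gt_of_lt_dDistLogic h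
  refine ⟨DFm.sub ψ ⟨semL T ψ Θ, semL_mem_Icc hwf ψ hΘ⟩, ?_, ?_⟩
  · exact hψ.trans_le (le_max_left _ _)
  · simp [semL]

lemma exists_separating_formula_finset (hwf : WellFormed T) {Δ : S → ℝ}
    {s : Finset (S → ℝ)} (hs : s.Nonempty) (hsub : ∀ Θ ∈ s, IsSubDist Θ) {ε : ℝ}
    (h : ∀ Θ ∈ s, ε < dDistLogic T Δ Θ) :
    ∃ χ : DFm A, ε < semL T χ Δ ∧ ∀ Θ ∈ s, semL T χ Θ ≤ 0 := by
  have : ∀ Θ, ∃ ψ : DFm A, Θ ∈ s → ε < semL T ψ Δ ∧ semL T ψ Θ = 0 := by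
    intro Θ
    by_cases hΘ : Θ ∈ s
    · obtain ⟨ψ, hψ⟩ := exists_separating_formula hwf (hsub Θ hΘ) (h Θ hΘ)
      exact ⟨ψ, fun _ => hψ⟩
    · exact ⟨DFm.top, fun h => absurd h hΘ⟩
  choose ψ hψ using this
  obtain ⟨χ, hχ⟩ := exists_semL_eq_inf' (T := T) hs ψ
  refine ⟨χ, ?_, fun Θ hΘ => ?_⟩
  · rw [hχ, Finset.lt_inf'_iff]
    exact fun Θ hΘ => (hψ Θ hΘ).1
  · rw [hχ]
    exact (Finset.inf'_le _ hΘ).trans (hψ Θ hΘ).2.le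

lemma dDistLogic_transfer (hwf : WellFormed T)
    (hfin : ∀ (Δ : S → ℝ) (a : A), {Δ' | liftTrans T a Δ Δ'}.Finite)
    {Δ₁ Δ₂ : S → ℝ} (h₁ : IsSubDist Δ₁) (h₂ : IsSubDist Δ₂) {ε : ℝ}
    (hd : dDistLogic T Δ₁ Δ₂ ≤ ε) {a : A} {Δ₁' : S → ℝ} (h : liftTrans T a Δ₁ Δ₁') :
    ∃ Δ₂', liftTrans T a Δ₂ Δ₂' ∧ dDistLogic T Δ₁' Δ₂' ≤ ε := by
  by_contra! hfar
  set succ := (hfin Δ₂ a).toFinset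
  have hmem : ∀ Θ, Θ ∈ succ ↔ liftTrans T a Δ₂ Θ := fun Θ => (hfin Δ₂ a).mem_toFinset
  have hne : succ.Nonempty := by
    obtain ⟨Θ, hΘ⟩ := liftTrans_exists T a Δ₂
    exact ⟨Θ, (hmem Θ).mpr hΘ⟩
  obtain ⟨χ, hχΔ₁', hχsucc⟩ := exists_separating_formula_finset hwf hne
    (fun Θ hΘ => liftTrans_isSubDist hwf h₂ ((hmem Θ).mp hΘ))
    (fun Θ hΘ => hfar Θ ((hmem Θ).mp hΘ))
  have hχΔ₁ : ε < semL T (DFm.dia a χ) Δ₁ := hχΔ₁'.trans_le (semL_le_semL_dia hwf χ h₁ h)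
  have hχΔ₂ : semL T (DFm.dia a χ) Δ₂ ≤ 0 :=
    semL_dia_le le_rfl fun Θ hΘ => hχsucc Θ ((hmem Θ).mpr hΘ)
  have := (le_abs_self _).trans (le_dDistLogic hwf h₁ h₂ (DFm.dia a χ))
  linarith

lemma isDBM_dDistLogic (hwf : WellFormed T)
    (hfin : ∀ (Δ : S → ℝ) (a : A), {Δ' | liftTrans T a Δ Δ'}.Finite) :
    IsDBM T (dDistLogic T) := by
  refine ⟨fun Δ hΔ => ?_, fun Δ Θ hΔ hΘ => ?_, fun Δ Θ Ξ hΔ hΘ hΞ => ?_, fun Δ Θ hΔ hΘ => ?_,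
    fun Δ Θ hΔ hΘ => ?_,
    fun Δ₁ Δ₂ h₁ h₂ ε _ _ hd a Δ₁' h => dDistLogic_transfer hwf hfin h₁ h₂ hd h⟩
  · exact le_antisymm (dDistLogic_le fun ψ => by simp)
      ((abs_nonneg _).trans (le_dDistLogic hwf hΔ hΔ DFm.top))
  · refine le_antisymm (dDistLogic_le fun ψ => ?_) (dDistLogic_le fun ψ => ?_) <;>
      rw [abs_sub_comm]
    exacts [le_dDistLogic hwf hΘ hΔ ψ, le_dDistLogic hwf hΔ hΘ ψ]
  · exact dDistLogic_le fun ψ => (abs_sub_le _ _ _).trans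
      (add_le_add (le_dDistLogic hwf hΔ hΘ ψ) (le_dDistLogic hwf hΘ hΞ ψ))
  · exact ⟨(abs_nonneg _).trans (le_dDistLogic hwf hΔ hΘ DFm.top),
      dDistLogic_le fun ψ => abs_semL_sub_le_one hwf ψ hΔ hΘ⟩
  · exact le_dDistLogic hwf hΔ hΘ DFm.top

end LogicalMetric

section Soundness

variable {S A : Type} [Fintype S] {T : PLTS S A} {d : (S → ℝ) → (S → ℝ) → ℝ}

lemma semL_dia_sub_le (hwf : WellFormed T) (hd : IsDBM T d) {a : A} {ψ : DFm A}
    (ih : ∀ Δ Θ, IsSubDist Δ → IsSubDist Θ → |semL T ψ Δ - semL T ψ Θ| ≤ d Δ Θ)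
    {Δ Θ : S → ℝ} (hΔ : IsSubDist Δ) (hΘ : IsSubDist Θ) :
    semL T (DFm.dia a ψ) Δ - semL T (DFm.dia a ψ) Θ ≤ d Δ Θ := by
  obtain ⟨-, -, -, hbound, -, htransfer⟩ := hd
  have hΔ₁ := semL_mem_Icc hwf (DFm.dia a ψ) hΔ
  have hΘ₁ := semL_mem_Icc hwf (DFm.dia a ψ) hΘ
  rcases lt_or_ge (d Δ Θ) 1 with hlt | hge
  swap
  · linarith [hΔ₁.2, hΘ₁.1]
  rw [sub_le_iff_le_add]
  refine semL_dia_le (by linarith [hΘ₁.1, (hbound Δ Θ hΔ hΘ).1]) fun Δ' hΔ' => ?_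
  obtain ⟨Θ', hΘ', hclose⟩ :=
    htransfer Δ Θ hΔ hΘ _ (hbound Δ Θ hΔ hΘ).1 hlt le_rfl a Δ' hΔ'
  have hψ := (abs_le.mp (ih Δ' Θ' (liftTrans_isSubDist hwf hΔ hΔ')
    (liftTrans_isSubDist hwf hΘ hΘ'))).2
  linarith [semL_le_semL_dia hwf ψ hΘ hΘ']

lemma abs_semL_sub_le_of_isDBM (hwf : WellFormed T) (hd : IsDBM T d) (ψ : DFm A) :
    ∀ Δ Θ, IsSubDist Δ → IsSubDist Θ → |semL T ψ Δ - semL T ψ Θ| ≤ d Δ Θ := by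
  induction ψ with
  | top => exact hd.2.2.2.2.1
  | neg ψ ih =>
      intro Δ Θ hΔ hΘ
      simp only [semL, sub_sub_sub_cancel_left, abs_sub_comm (semL T ψ Θ)]
      exact ih Δ Θ hΔ hΘ
  | sub ψ p ih =>
      intro Δ Θ hΔ hΘ
      refine (abs_max_sub_max_le_abs _ _ 0).trans ?_
      rw [sub_sub_sub_cancel_right]
      exact ih Δ Θ hΔ hΘ
  | and ψ₁ ψ₂ ih₁ ih₂ =>
      intro Δ Θ hΔ hΘ
      exact (abs_min_sub_min_le_max _ _ _ _).trans (max_le (ih₁ Δ Θ hΔ hΘ) (ih₂ Δ Θ hΔ hΘ))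
  | dia a ψ ih =>
      intro Δ Θ hΔ hΘ
      refine abs_sub_le_iff.mpr ⟨semL_dia_sub_le hwf hd ih hΔ hΘ, ?_⟩
      rw [hd.2.1 Δ Θ hΔ hΘ]
      exact semL_dia_sub_le hwf hd ih hΘ hΔ

end Soundness

/-- Completeness of the distribution-level logic `L^{D*}`: the logical metric
is itself a distribution-based bisimulation metric, hence it coincides with the
distribution-based bisimilarity metric. -/
theorem dist_logic_completeness {S A : Type} [Fintype S] (T : PLTS S A)
    (hwf : WellFormed T)
    (hfin : ∀ (Δ : S → ℝ) (a : A), {Δ' | liftTrans T a Δ Δ'}.Finite) :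
    IsDBM T (dDistLogic T) ∧
    ∀ dd : (S → ℝ) → (S → ℝ) → ℝ,
      (IsDBM T dd ∧
        ∀ d, IsDBM T d → ∀ Δ Θ, IsSubDist Δ → IsSubDist Θ → dd Δ Θ ≤ d Δ Θ) →
      ∀ Δ Θ : S → ℝ, IsSubDist Δ → IsSubDist Θ → dd Δ Θ = dDistLogic T Δ Θ := by
  have hlogic := isDBM_dDistLogic hwf hfin
  refine ⟨hlogic, fun dd ⟨hdd, hleast⟩ Δ Θ hΔ hΘ => le_antisymm (hleast _ hlogic Δ Θ hΔ hΘ) ?_⟩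
  exact dDistLogic_le fun ψ => abs_semL_sub_le_of_isDBM hwf hdd ψ Δ Θ hΔ hΘ
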